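/- There exists a surjective group homomorphism from the group ⟨y₁,…,y₈ | y₇y₂y₇⁻¹y₁⁻¹, y₈y₃y₈⁻¹y₂⁻¹, y₆y₄y₆⁻¹y₃⁻¹, y₁y₅y₁⁻¹y₄⁻¹, y₃y₆y₃⁻¹y₅⁻¹, y₄y₇y₄⁻¹y₆⁻¹, y₂y₈y₂⁻¹y₇⁻¹⟩ onto the group ⟨x₁,x₂,x₃ | x₃x₁x₃⁻¹x₂⁻¹, x₁x₂x₁⁻¹x₃⁻¹⟩, given by y₁ ↦ x₃, y₂ ↦ x₂, y₃ ↦ x₁, y₄ ↦ x₃, y₅ ↦ x₃, y₆ ↦ x₂, y₇ ↦ x₁, y₈ ↦ x₃. -/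

import Mathlib

/-- Wirtinger relators of the knot `8₅` (generators `y₁,…,y₈`). -/
def rels8_5 : Set (FreeGroup (Fin 8)) :=
  let y : Fin 8 → FreeGroup (Fin 8) := FreeGroup.of
  { y 6 * y 1 * (y 6)⁻¹ * (y 0)⁻¹,
    y 7 * y 2 * (y 7)⁻¹ * (y 1)⁻¹,
    y 5 * y 3 * (y 5)⁻¹ * (y 2)⁻¹,
    y 0 * y 4 * (y 0)⁻¹ * (y 3)⁻¹,
    y 2 * y 5 * (y 2)⁻¹ * (y 4)⁻¹,
    y 3 * y 6 * (y 3)⁻¹ * (y 5)⁻¹,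
    y 1 * y 7 * (y 1)⁻¹ * (y 6)⁻¹ }

/-- Wirtinger relators of the trefoil `3₁` (generators `x₁,x₂,x₃`). -/
def relsTrefoil : Set (FreeGroup (Fin 3)) :=
  let x : Fin 3 → FreeGroup (Fin 3) := FreeGroup.of
  { x 2 * x 0 * (x 2)⁻¹ * (x 1)⁻¹,
    x 0 * x 1 * (x 0)⁻¹ * (x 2)⁻¹ }

/-!
Send each arc `yᵢ` of `8₅` to the trefoil arc `x_(coloring8_5 i)`. At every crossing of `8₅` the
three arcs land either on a single trefoil arc or on the arcs `xᵢ, xᵢ₊₁, xᵢ₊₂` (indices mod 3)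
of a trefoil crossing, so every Wirtinger relator of `8₅` maps to `1`; the third trefoil crossing
relation follows from the two relators. The image contains every `xᵢ`, hence is everything.
-/

namespace PresentedGroup

variable {α : Type*} {rels : Set (FreeGroup α)}

theorem of_mul_of_eq_of_mul_of_of_mem {a b c : α}
    (h : FreeGroup.of a * FreeGroup.of b * (FreeGroup.of a)⁻¹ * (FreeGroup.of c)⁻¹ ∈ rels) :
    (of a : PresentedGroup rels) * of b = of c * of a := by
  have h₁ := one_of_mem h
  rwa [map_mul, map_inv, mul_inv_eq_one, map_mul, map_mul, map_inv, mul_inv_eq_iff_eq_mul] at h₁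

theorem surjective_of_of_mem_range {G : Type*} [Group G] (φ : G →* PresentedGroup rels)
    (h : ∀ a, of a ∈ φ.range) : Function.Surjective φ :=
  fun x ↦ generated_by rels φ.range h x

end PresentedGroup

open PresentedGroup

theorem trefoil_of_mul_of_succ (i : Fin 3) :
    (of i : PresentedGroup relsTrefoil) * of (i + 1) = of (i + 2) * of i := by
  have h₂₀ : (of 2 : PresentedGroup relsTrefoil) * of 0 = of 1 * of 2 :=
    of_mul_of_eq_of_mul_of_of_mem (by simp [relsTrefoil])
  have h₀₁ : (of 0 : PresentedGroup relsTrefoil) * of 1 = of 2 * of 0 :=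
    of_mul_of_eq_of_mul_of_of_mem (by simp [relsTrefoil])
  fin_cases i
  · exact h₀₁
  · exact h₂₀.symm.trans h₀₁.symm
  · exact h₂₀

def coloring8_5 : Fin 8 → Fin 3 := ![2, 1, 0, 2, 2, 1, 0, 2]

theorem lift_coloring8_5_eq_one :
    ∀ r ∈ rels8_5,
      FreeGroup.lift (fun i ↦ (of (coloring8_5 i) : PresentedGroup relsTrefoil)) r = 1 := by
  simp only [rels8_5, Set.mem_insert_iff, Set.mem_singleton_iff]
  rintro r (rfl | rfl | rfl | rfl | rfl | rfl | rfl) <;>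
    rw [map_mul, map_inv, mul_inv_eq_one, map_mul, map_mul, map_inv, mul_inv_eq_iff_eq_mul] <;>
    simp only [FreeGroup.lift_apply_of]
  exacts [trefoil_of_mul_of_succ 0, trefoil_of_mul_of_succ 2, trefoil_of_mul_of_succ 1, rfl,
    trefoil_of_mul_of_succ 0, trefoil_of_mul_of_succ 2, trefoil_of_mul_of_succ 1]

/-- There is a surjective homomorphism `G(8₅) → G(3₁)` sending
`y₁,…,y₈` to `x₃,x₂,x₁,x₃,x₃,x₂,x₁,x₃` respectively. -/
theorem surjection_8_5_trefoil :
    ∃ φ : PresentedGroup rels8_5 →* PresentedGroup relsTrefoil,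
      Function.Surjective φ ∧
      (let y : Fin 8 → PresentedGroup rels8_5 := PresentedGroup.of
       let x : Fin 3 → PresentedGroup relsTrefoil := PresentedGroup.of
       φ (y 0) = x 2 ∧ φ (y 1) = x 1 ∧ φ (y 2) = x 0 ∧ φ (y 3) = x 2 ∧
       φ (y 4) = x 2 ∧ φ (y 5) = x 1 ∧ φ (y 6) = x 0 ∧ φ (y 7) = x 2) := by
  set φ := toGroup lift_coloring8_5_eq_one
  have hφ (i : Fin 8) : φ (of i) = of (coloring8_5 i) := toGroup.of lift_coloring8_5_eq_one
  refine ⟨φ, surjective_of_of_mem_range φ fun j ↦ ?_,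
    hφ 0, hφ 1, hφ 2, hφ 3, hφ 4, hφ 5, hφ 6, hφ 7⟩
  fin_cases j
  exacts [⟨of 2, hφ 2⟩, ⟨of 1, hφ 1⟩, ⟨of 0, hφ 0⟩]
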